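/- For any positive integers k and m, every k-uniform hypergraph on n ≥ m vertices with fewer than C(n,k)/C(m,k) edges contains an independent set of size m (a set of m vertices containing no edge). -/

import Mathlib

/-!
Double counting: if every `m`-set contains an edge, then counting pairs (edge, `m`-superset)
gives `C(n, m) ≤ |E| · C(n - k, m - k)`. Multiplying by `C(m, k)` and using
`C(n, m) C(m, k) = C(n, k) C(n - k, m - k)` yields `C(n, k) ≤ |E| · C(m, k)`.
-/

open Finset Fintype

section
variable {V : Type*} [Fintype V] [DecidableEq V] {E : Finset (Finset V)} {k m : ℕ}

lemma choose_le_card_mul_choose_sub_of_forall_exists_subset (hunif : ∀ e ∈ E, #e = k)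
    (hkm : k ≤ m) (hcover : ∀ I : Finset V, #I = m → ∃ e ∈ E, e ⊆ I) :
    (card V).choose m ≤ #E * (card V - k).choose (m - k) := by
  have hcover' :
      powersetCard m univ ⊆ E.biUnion fun e ↦ (powersetCard m univ).filter (e ⊆ ·) := by
    intro I hI
    obtain ⟨e, he, heI⟩ := hcover I (mem_powersetCard.mp hI).2
    exact mem_biUnion.mpr ⟨e, he, mem_filter.mpr ⟨hI, heI⟩⟩
  calc (card V).choose m = #(powersetCard m (univ : Finset V)) := by simp
    _ ≤ ∑ e ∈ E, #((powersetCard m univ).filter (e ⊆ ·)) :=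
      (card_le_card hcover').trans card_biUnion_le
    _ = ∑ _e ∈ E, (card V - k).choose (m - k) := by
      refine sum_congr rfl fun e he ↦ ?_
      rw [card_filter_powersetCard_subset _ _ _ (subset_univ e) (hunif e he ▸ hkm), card_univ,
        hunif e he]
    _ = #E * (card V - k).choose (m - k) := by rw [sum_const, smul_eq_mul]

lemma choose_le_card_mul_choose_of_forall_exists_subset (hunif : ∀ e ∈ E, #e = k)
    (hm : m ≤ card V) (hcover : ∀ I : Finset V, #I = m → ∃ e ∈ E, e ⊆ I) :
    (card V).choose k ≤ #E * m.choose k := by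
  obtain ⟨I, -, hI⟩ := exists_subset_card_eq (s := (univ : Finset V)) (by simpa using hm)
  obtain ⟨e, he, heI⟩ := hcover I hI
  have hkm : k ≤ m := hunif e he ▸ hI ▸ card_le_card heI
  have hpos : 0 < (card V - k).choose (m - k) := Nat.choose_pos (by omega)
  refine Nat.le_of_mul_le_mul_right ?_ hpos
  calc (card V).choose k * (card V - k).choose (m - k) = (card V).choose m * m.choose k :=
        (Nat.choose_mul hkm).symm
    _ ≤ #E * (card V - k).choose (m - k) * m.choose k :=
      Nat.mul_le_mul_right _
        (choose_le_card_mul_choose_sub_of_forall_exists_subset hunif hkm hcover)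
    _ = #E * m.choose k * (card V - k).choose (m - k) := Nat.mul_right_comm _ _ _

end

theorem turan_hypergraph_general {V : Type*} [Fintype V] [DecidableEq V]
    (k m : ℕ)
    (E : Finset (Finset V)) (hunif : ∀ e ∈ E, e.card = k)
    (hnm : m ≤ Fintype.card V)
    (hcount : E.card * m.choose k < (Fintype.card V).choose k) :
    ∃ I : Finset V, I.card = m ∧ ∀ e ∈ E, ¬ e ⊆ I := by
  by_contra! hcover
  exact hcount.not_ge (choose_le_card_mul_choose_of_forall_exists_subset hunif hnm hcover)

/-- Katona–Nemetz–Simonovits: every k-uniform hypergraph on n ≥ m vertices with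
fewer than C(n,k)/C(m,k) edges (i.e. |E|·C(m,k) < C(n,k)) contains an
independent set of size m. -/
theorem turan_hypergraph {V : Type*} [Fintype V] [DecidableEq V]
    (k m : ℕ) (hk : 0 < k) (hm : 0 < m)
    (E : Finset (Finset V)) (hunif : ∀ e ∈ E, e.card = k)
    (hnm : m ≤ Fintype.card V)
    (hcount : E.card * m.choose k < (Fintype.card V).choose k) :
    ∃ I : Finset V, I.card = m ∧ ∀ e ∈ E, ¬ e ⊆ I :=
  turan_hypergraph_general k m E hunif hnm hcount
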